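/- Let M ⊆ H²(D,Cⁿ) be a closed nearly S*-invariant subspace with finite defect space D of dimension m (taken orthogonal to M). If not every function in M vanishes at 0, set W := M ⊖ (M ∩ zH²(D,Cⁿ)) and let W₁,…,W_r be an orthonormal basis of W; if every function in M vanishes at 0, set W := {0} (and r = 0). Then for every i ∈ {1,…,n}, the (not necessarily closed) subspace M_i := P_i(M), where P_i : H²(D,Cⁿ) → H²(D,Cⁱ) projects onto the first i coordinates, is nearly S*-invariant with defect space ((span{P_i(W₁),…,P_i(W_r)})/z ∩ H²(D,Cⁱ)) + P_i(D); precisely, whenever f ∈ M_i and f(0) = 0, then f/z ∈ M_i + ((span{P_i(W₁),…,P_i(W_r)})/z ∩ H²(D,Cⁱ)) + P_i(D). -/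

import Mathlib

open MeasureTheory Complex Real
open scoped ENNReal ComplexConjugate

noncomputable section

namespace Paper

instance : Fact (0 < 2 * Real.pi) := ⟨by positivity⟩

abbrev Tc : Type := AddCircle (2 * Real.pi)
abbrev μ0 : MeasureTheory.Measure Tc := AddCircle.haarAddCircle
abbrev L2 : Type := MeasureTheory.Lp ℂ 2 μ0

def coeffCLM (n : ℤ) : L2 →L[ℂ] ℂ :=
  LinearMap.mkContinuous
    { toFun := fun f => fourierBasis.repr f n
      map_add' := fun f g => by simp
      map_smul' := fun c f => by simp }
    1
    (fun f => by
      have h := lp.norm_apply_le_norm (p := 2) (by norm_num) (fourierBasis.repr f) n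
      simpa using h)

def cf (f : L2) (n : ℤ) : ℂ := coeffCLM n f

/-- The subspace of `L²(𝕋)` of functions whose Fourier coefficients of index `< k` vanish.
Thus `coeffGE 0 = H²` and `coeffGE k = zᵏH²` for `k ≥ 0`. -/
def coeffGE (k : ℤ) : Submodule ℂ L2 :=
  ⨅ (n : ℤ) (_ : n < k), LinearMap.ker (coeffCLM n : L2 →ₗ[ℂ] ℂ)

/-- The subspace of `L²(𝕋)` of functions whose Fourier coefficients of index `≥ k` vanish.
Thus `coeffLT 0 = conj (H²₀) = (H²)^⊥`. -/
def coeffLT (k : ℤ) : Submodule ℂ L2 :=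
  ⨅ (n : ℤ) (_ : k ≤ n), LinearMap.ker (coeffCLM n : L2 →ₗ[ℂ] ℂ)

/-- The Hardy space `H²` of the unit disc, viewed as a subspace of `L²(𝕋)`. -/
def H2 : Submodule ℂ L2 := coeffGE 0

lemma mem_coeffGE {k : ℤ} {f : L2} : f ∈ coeffGE k ↔ ∀ n < k, cf f n = 0 := by
  simp [coeffGE, cf, Submodule.mem_iInf, LinearMap.mem_ker]

lemma isClosed_coeffGE (k : ℤ) : IsClosed ((coeffGE k : Submodule ℂ L2) : Set L2) := by
  have h : ((coeffGE k : Submodule ℂ L2) : Set L2)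
      = ⋂ (n : ℤ) (_ : n < k), (LinearMap.ker (coeffCLM n : L2 →ₗ[ℂ] ℂ) : Set L2) := by
    ext f
    simp [coeffGE, Submodule.mem_iInf, Set.mem_iInter]
  rw [h]
  exact isClosed_iInter fun n => isClosed_iInter fun _ => ContinuousLinearMap.isClosed_ker (coeffCLM n)

end Paper
namespace Paper

open scoped Classical in
/-- Multiplication by an `L^∞` function, as a linear map on `L²(𝕋)` (defined to be `0` if the
symbol is not essentially bounded). -/
def mulLM (g : Tc → ℂ) : L2 →ₗ[ℂ] L2 :=
  if hg : MemLp g ⊤ μ0 then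
    { toFun := fun f => ((Lp.memLp f).smul (r := 2) hg).toLp (g • ⇑f)
      map_add' := fun f₁ f₂ => by
        apply Lp.ext
        filter_upwards [MemLp.coeFn_toLp ((Lp.memLp (f₁ + f₂)).smul (r := 2) hg),
          MemLp.coeFn_toLp ((Lp.memLp f₁).smul (r := 2) hg),
          MemLp.coeFn_toLp ((Lp.memLp f₂).smul (r := 2) hg),
          Lp.coeFn_add f₁ f₂,
          Lp.coeFn_add (((Lp.memLp f₁).smul (r := 2) hg).toLp (g • ⇑f₁))
            (((Lp.memLp f₂).smul (r := 2) hg).toLp (g • ⇑f₂))] with x h0 h1 h2 h3 h4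
        rw [h0, h4, Pi.add_apply, h1, h2]
        simp only [Pi.smul_apply', Pi.add_apply, h3, smul_add]
      map_smul' := fun c f => by
        apply Lp.ext
        filter_upwards [MemLp.coeFn_toLp ((Lp.memLp (c • f)).smul (r := 2) hg),
          MemLp.coeFn_toLp ((Lp.memLp f).smul (r := 2) hg),
          Lp.coeFn_smul c f,
          Lp.coeFn_smul c (((Lp.memLp f).smul (r := 2) hg).toLp (g • ⇑f))] with x h0 h1 h3 h4
        simp only [RingHom.id_apply]
        rw [h0, h4, Pi.smul_apply, h1]
        simp only [Pi.smul_apply', Pi.smul_apply, h3]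
        exact smul_comm _ _ _ }
  else 0

end Paper
namespace Paper

/-- The orthogonal projection of `L²(𝕋)` onto a closed subspace, as a map `L² → L²`. -/
def projCLM (U : Submodule ℂ L2) (hU : IsClosed (U : Set L2)) : L2 →L[ℂ] L2 :=
  letI : CompleteSpace U := hU.completeSpace_coe
  U.subtypeL.comp U.orthogonalProjectionOnto

/-- The subspace `θH²` of `L²(𝕋)`. -/
def thetaH2 (θ : Tc → ℂ) : Submodule ℂ L2 := H2.map (mulLM θ)

/-- The model space `K_θ = H² ⊖ θH²`. -/
def Kmod (θ : Tc → ℂ) : Submodule ℂ L2 := H2 ⊓ (thetaH2 θ)ᗮ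

lemma isClosed_Kmod (θ : Tc → ℂ) : IsClosed ((Kmod θ : Submodule ℂ L2) : Set L2) :=
  (isClosed_coeffGE 0).inter (thetaH2 θ).isClosed_orthogonal

/-- The orthogonal projection `P_θ : L² → K_θ` (composed with the inclusion back into `L²`). -/
def Ptheta (θ : Tc → ℂ) : L2 →L[ℂ] L2 := projCLM (Kmod θ) (isClosed_Kmod θ)

/-- The orthogonal projection `P₊ : L² → H²`. -/
def Pplus : L2 →L[ℂ] L2 := projCLM H2 (isClosed_coeffGE 0)

/-- The independent variable `z = e^{it}`, as a function on the circle. -/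
def zf : Tc → ℂ := fun x => fourier 1 x

/-- The conjugate variable `z̄ = e^{-it}`. -/
def zbar : Tc → ℂ := fun x => fourier (-1) x

lemma memLp_fourier (n : ℤ) : MemLp (fun x : Tc => (fourier n x : ℂ)) ⊤ μ0 := by
  refine memLp_top_of_bound ((fourier n).continuous.aestronglyMeasurable) 1 ?_
  exact Filter.Eventually.of_forall fun x => le_of_eq (Circle.norm_coe _)

lemma memLp_zf : MemLp zf ⊤ μ0 := memLp_fourier 1

lemma memLp_zbar : MemLp zbar ⊤ μ0 := memLp_fourier (-1)

/-- The backward shift `S* : f ↦ (f - f(0))/z`, realised on `L²(𝕋)` as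
`f ↦ P₊(z̄ f)`; on `H²` this is the usual backward shift. -/
def Sstar : L2 →ₗ[ℂ] L2 := (Pplus : L2 →ₗ[ℂ] L2).comp (mulLM zbar)

/-- `θ` is an inner function: it is essentially bounded, unimodular a.e. on the circle, and
all its negative Fourier coefficients vanish (i.e. it is the boundary function of a bounded
analytic function on the disc). -/
structure IsInner (θ : Tc → ℂ) : Prop where
  memLinf : MemLp θ ⊤ μ0
  unimodular : ∀ᵐ x ∂μ0, ‖θ x‖ = 1
  analytic : ∀ n : ℤ, n < 0 → fourierCoeff θ n = 0

/-- Pointwise complex conjugation of a function on the circle. -/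
def conjFun (f : Tc → ℂ) : Tc → ℂ := fun x => (starRingEnd ℂ) (f x)

lemma memLp_conj {f : Tc → ℂ} {p : ℝ≥0∞} (hf : MemLp f p μ0) : MemLp (conjFun f) p μ0 := by
  refine ⟨continuous_star.comp_aestronglyMeasurable hf.1, ?_⟩
  have h : eLpNorm (conjFun f) p μ0 = eLpNorm f p μ0 :=
    eLpNorm_congr_norm_ae (Filter.Eventually.of_forall fun x => by
      simp [conjFun])
  rw [h]
  exact hf.2

/-- Complex conjugation on `L²(𝕋)`. -/
def conjL2 (f : L2) : L2 := (memLp_conj (Lp.memLp f)).toLp (conjFun ⇑f)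

end Paper
namespace Paper

/-- The set `w·U = {h ∈ L² : h = w·k (a.e.) for some k ∈ U}`, for a fixed function `w` on the
circle and a subspace `U ⊆ L²`; this is a (not necessarily closed) subspace of `L²`. -/
def mulSet (w : Tc → ℂ) (U : Submodule ℂ L2) : Submodule ℂ L2 where
  carrier := {h : L2 | ∃ k ∈ U, (⇑h : Tc → ℂ) =ᵐ[μ0] fun x => w x * (⇑k : Tc → ℂ) x}
  add_mem' := by
    rintro a b ⟨k₁, hk₁, ha⟩ ⟨k₂, hk₂, hb⟩
    refine ⟨k₁ + k₂, U.add_mem hk₁ hk₂, ?_⟩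
    filter_upwards [ha, hb, Lp.coeFn_add a b, Lp.coeFn_add k₁ k₂] with x h1 h2 h3 h4
    simp only [h3, Pi.add_apply, h1, h2, h4, mul_add]
  zero_mem' := by
    refine ⟨0, U.zero_mem, ?_⟩
    filter_upwards [Lp.coeFn_zero ℂ 2 μ0] with x h1
    simp [h1]
  smul_mem' := by
    rintro c a ⟨k, hk, ha⟩
    refine ⟨c • k, U.smul_mem c hk, ?_⟩
    filter_upwards [ha, Lp.coeFn_smul c a, Lp.coeFn_smul c k] with x h1 h2 h3
    simp only [h2, Pi.smul_apply, h1, h3, smul_eq_mul]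
    ring

/-- `f` is an outer function: `f ∈ H²` and the polynomial multiples of `f` are dense in `H²`
(i.e. `f` is cyclic for the forward shift). -/
def IsOuter (f : L2) : Prop :=
  f ∈ H2 ∧
    (Submodule.span ℂ (Set.range fun k : ℕ => ((mulLM zf) ^ k) f)).topologicalClosure = H2

/-- `h` is a cyclic vector for the backward shift `S*` on `H²`. -/
def CyclicSstar (h : L2) : Prop :=
  (Submodule.span ℂ (Set.range fun k : ℕ => (Sstar ^ k) h)).topologicalClosure = H2

/-- `d` divides `u` in the sense of inner functions. -/
def InnerDvd (d u : Tc → ℂ) : Prop :=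
  ∃ v : Tc → ℂ, IsInner v ∧ ∀ᵐ x ∂μ0, u x = d x * v x

/-- Two inner functions have greatest common inner divisor `1`, i.e. every common inner
divisor is a (necessarily unimodular) constant. -/
def CoprimeInner (u₁ u₂ : Tc → ℂ) : Prop :=
  ∀ d : Tc → ℂ, IsInner d → InnerDvd d u₁ → InnerDvd d u₂ → ∃ c : ℂ, ∀ᵐ x ∂μ0, d x = c

/-- The kernel of the truncated Toeplitz operator `A_g^θ = P_θ (g ·) : K_θ → K_θ`:
`f ∈ ker A_g^θ` iff `f ∈ K_θ` and `g f ⊥ K_θ`. -/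
def kerA (θ g : Tc → ℂ) : Submodule ℂ L2 :=
  Kmod θ ⊓ ((Kmod θ)ᗮ).comap (mulLM g)

/-- The kernel of the dual truncated Toeplitz operator `D_g^θ = Q (g ·) : K_θ^⊥ → K_θ^⊥`:
`f ∈ ker D_g^θ` iff `f ∈ K_θ^⊥` and `g f ⊥ K_θ^⊥`. -/
def kerD (θ g : Tc → ℂ) : Submodule ℂ L2 :=
  (Kmod θ)ᗮ ⊓ (((Kmod θ)ᗮ)ᗮ).comap (mulLM g)

/-- The space `A = {f ∈ ker D_g^θ : gf ∈ K_θ ∩ zH²}`. -/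
def dualA (θ g : Tc → ℂ) : Submodule ℂ L2 :=
  kerD θ g ⊓ (Kmod θ ⊓ coeffGE 1).comap (mulLM g)

/-- The space `C = ker D_g^θ ∩ (conj H²₀ ⊕ θzH²) ∩ A`. -/
def dualC (θ g : Tc → ℂ) : Submodule ℂ L2 :=
  kerD θ g ⊓ (coeffLT 0 ⊔ (coeffGE 1).map (mulLM θ)) ⊓ dualA θ g

end Paper
namespace Paper

/-- The vector-valued space `L²(𝕋, ℂⁿ)`, realised as an `ℓ²`-direct sum of `n` copies of
`L²(𝕋)`; the subspace `H2v n` below is the vector-valued Hardy space `H²(𝔻, ℂⁿ)`. -/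
abbrev Vec (n : ℕ) : Type := PiLp 2 (fun _ : Fin n => L2)

/-- The `i`-th component, as a linear map `L²(𝕋, ℂⁿ) → L²(𝕋)`. -/
def compLM {n : ℕ} (i : Fin n) : Vec n →ₗ[ℂ] L2 where
  toFun F := F i
  map_add' F G := rfl
  map_smul' c F := rfl

/-- Vector-valued analogue of `coeffGE`: `coeffGEv n 0 = H²(𝔻, ℂⁿ)` and
`coeffGEv n 1 = zH²(𝔻, ℂⁿ)`. -/
def coeffGEv (n : ℕ) (k : ℤ) : Submodule ℂ (Vec n) :=
  ⨅ i : Fin n, (coeffGE k).comap (compLM i)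

/-- The vector-valued Hardy space `H²(𝔻, ℂⁿ)`. -/
def H2v (n : ℕ) : Submodule ℂ (Vec n) := coeffGEv n 0

/-- The vector-valued model space `K_θ(𝔻, ℂⁿ)` (all components in `K_θ`). -/
def Kv (θ : Tc → ℂ) (n : ℕ) : Submodule ℂ (Vec n) :=
  ⨅ i : Fin n, (Kmod θ).comap (compLM i)

/-- Evaluation at the origin, `F ↦ F(0)`, for (Hardy-space) elements of `L²(𝕋, ℂⁿ)`. -/
def ev0 {n : ℕ} (F : Vec n) : EuclideanSpace ℂ (Fin n) := WithLp.toLp 2 (fun i => cf (F i) 0)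

/-- Evaluation at the origin as a linear map `H²(𝔻, ℂⁿ) → ℂⁿ`. -/
def ev0LM (n : ℕ) : Vec n →ₗ[ℂ] EuclideanSpace ℂ (Fin n) where
  toFun := ev0
  map_add' _F _G := by
    ext i
    simp [ev0, cf]
  map_smul' _c _F := by
    ext i
    simp [ev0, cf]

/-- The componentwise backward shift on `L²(𝕋, ℂⁿ)`. -/
def SstarV {n : ℕ} : Vec n →ₗ[ℂ] Vec n where
  toFun F := WithLp.toLp 2 (fun i => Sstar (F i))
  map_add' _F _G := by
    ext i
    simp
  map_smul' _c _F := by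
    ext i
    simp

/-- Componentwise multiplication by a scalar `L^∞` function on `L²(𝕋, ℂⁿ)`. -/
def mulVLM (g : Tc → ℂ) {n : ℕ} : Vec n →ₗ[ℂ] Vec n where
  toFun F := WithLp.toLp 2 (fun i => mulLM g (F i))
  map_add' _F _G := by
    ext i
    simp
  map_smul' _c _F := by
    ext i
    simp

/-- The projection onto the first `i` coordinates, `P_i : H²(𝔻, ℂⁿ) → H²(𝔻, ℂⁱ)`. -/
def projLE {n i : ℕ} (h : i ≤ n) : Vec n →ₗ[ℂ] Vec i where
  toFun F := WithLp.toLp 2 (fun j => F (Fin.castLE h j))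
  map_add' F G := rfl
  map_smul' c F := rfl

/-- The `i`-th row of a matrix symbol applied to a vector function:
`F ↦ ∑ j, G i j • F j`. -/
def rowLM {n : ℕ} (G : Matrix (Fin n) (Fin n) (Tc → ℂ)) (i : Fin n) : Vec n →ₗ[ℂ] L2 :=
  ∑ j : Fin n, (mulLM (G i j)).comp (compLM j)

/-- The kernel of the block Toeplitz operator `T_G = P₊(G ·)` on `H²(𝔻, ℂⁿ)`:
`F ∈ ker T_G` iff `F ∈ H²(𝔻, ℂⁿ)` and every component of `GF` is orthogonal to `H²`. -/
def kerT {n : ℕ} (G : Matrix (Fin n) (Fin n) (Tc → ℂ)) : Submodule ℂ (Vec n) :=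
  H2v n ⊓ ⨅ i : Fin n, (H2ᗮ).comap (rowLM G i)

/-- The kernel of the matrix truncated Toeplitz operator `A_G^θ = P_θ(G ·)` on `K_θ(𝔻, ℂ²)`. -/
def kerAv (θ : Tc → ℂ) (G : Matrix (Fin 2) (Fin 2) (Tc → ℂ)) : Submodule ℂ (Vec 2) :=
  Kv θ 2 ⊓ ⨅ i : Fin 2, ((Kmod θ)ᗮ).comap (rowLM G i)

/-- The scalar-type space `w·U ⊆ L²(𝕋, ℂⁿ)`, for a fixed vector function `w` and a
subspace `U ⊆ L²(𝕋)` of scalar functions. -/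
def vecMulSet {n : ℕ} (w : Vec n) (U : Submodule ℂ L2) : Submodule ℂ (Vec n) where
  carrier := {F | ∃ k ∈ U, ∀ i : Fin n,
    (⇑(F i) : Tc → ℂ) =ᵐ[μ0] fun x => (⇑(w i) : Tc → ℂ) x * (⇑k : Tc → ℂ) x}
  add_mem' := by
    rintro a b ⟨k₁, hk₁, ha⟩ ⟨k₂, hk₂, hb⟩
    refine ⟨k₁ + k₂, U.add_mem hk₁ hk₂, fun i => ?_⟩
    have hab : (a + b) i = a i + b i := rfl
    rw [hab]
    filter_upwards [ha i, hb i, Lp.coeFn_add (a i) (b i), Lp.coeFn_add k₁ k₂]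
      with x h1 h2 h3 h4
    simp only [h3, Pi.add_apply, h1, h2, h4, mul_add]
  zero_mem' := by
    refine ⟨0, U.zero_mem, fun i => ?_⟩
    have h0 : (0 : Vec n) i = 0 := rfl
    rw [h0]
    filter_upwards [Lp.coeFn_zero ℂ 2 μ0] with x h1
    simp [h1]
  smul_mem' := by
    rintro c a ⟨k, hk, ha⟩
    refine ⟨c • k, U.smul_mem c hk, fun i => ?_⟩
    have hc : (c • a) i = c • (a i) := rfl
    rw [hc]
    filter_upwards [ha i, Lp.coeFn_smul c (a i), Lp.coeFn_smul c k] with x h1 h2 h3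
    simp only [h2, Pi.smul_apply, h1, h3, smul_eq_mul]
    ring

end Paper
namespace Paper

/-- The representation `F = F₀ k₀ + z ∑ⱼ kⱼ eⱼ` of Theorem 3.4(1): here the columns of `F₀`
are `W 0, …, W (r-1)`, the `eⱼ` are an orthonormal basis of the defect space, and the
parameter `k = (k₀, k₁, …, k_m)` runs through a subspace of `H²(𝔻, ℂ^{r+m})`. -/
def rep1 {n r m : ℕ} (W : Fin r → Vec n) (e : Fin m → Vec n) (k : Vec (r + m)) (F : Vec n) :
    Prop :=
  ∀ i : Fin n,
    (⇑(F i) : Tc → ℂ) =ᵐ[μ0] fun x =>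
      (∑ j : Fin r, (⇑(k (Fin.castAdd m j)) : Tc → ℂ) x * (⇑(W j i) : Tc → ℂ) x) +
        zf x * ∑ j : Fin m, (⇑(k (Fin.natAdd r j)) : Tc → ℂ) x * (⇑(e j i) : Tc → ℂ) x

/-- The representation `F = z ∑ⱼ kⱼ eⱼ` of Theorem 3.4(2). -/
def rep2 {n m : ℕ} (e : Fin m → Vec n) (k : Vec m) (F : Vec n) : Prop :=
  ∀ i : Fin n,
    (⇑(F i) : Tc → ℂ) =ᵐ[μ0] fun x =>
      zf x * ∑ j : Fin m, (⇑(k j) : Tc → ℂ) x * (⇑(e j i) : Tc → ℂ) x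

end Paper
namespace Paper

/-!
Split `F ∈ M` orthogonally along the closed subspace `M ∩ zH²(𝔻, ℂⁿ)`: `F = F₁ + F₂` with
`F₁ ∈ M ∩ zH²` and `F₂ ∈ M ⊖ (M ∩ zH²) = span{W₁, …, W_r}`. Near invariance puts `S*F₁` in
`M ⊕ D`, so `P_i S*F₁ ∈ P_i(M) + P_i(D)`. Since `P_i F` and `F₁` vanish at `0`, so does `P_i F₂`,
hence `S*(P_i F₂) = P_i F₂ / z` lies in `H²` and in `span{P_i W₁, …, P_i W_r} / z`.
-/

lemma mulLM_apply_ae {g : Tc → ℂ} (hg : MemLp g ⊤ μ0) (f : L2) :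
    (⇑(mulLM g f) : Tc → ℂ) =ᵐ[μ0] fun x => g x * (⇑f : Tc → ℂ) x := by
  classical
  simp only [mulLM, dif_pos hg, LinearMap.coe_mk, AddHom.coe_mk]
  filter_upwards [MemLp.coeFn_toLp ((Lp.memLp f).smul (r := 2) hg)] with x hx
  simpa [smul_eq_mul] using hx

lemma cf_eq_fourierCoeff (f : L2) (n : ℤ) : cf f n = fourierCoeff (⇑f) n :=
  fourierBasis_repr f n

lemma fourierCoeff_congr_ae {f g : Tc → ℂ} (h : f =ᵐ[μ0] g) (n : ℤ) :
    fourierCoeff f n = fourierCoeff g n :=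
  integral_congr_ae (h.mono fun x hx => by simp only [hx])

lemma fourierCoeff_fourier_mul {T : ℝ} [Fact (0 < T)] (f : AddCircle T → ℂ) (m n : ℤ) :
    fourierCoeff (fun x => fourier m x * f x) n = fourierCoeff f (n - m) := by
  refine integral_congr_ae (Filter.Eventually.of_forall fun x => ?_)
  simp only [smul_eq_mul, neg_sub, sub_eq_add_neg m n, add_comm m, fourier_add]
  ring

lemma cf_mulLM_fourier (m : ℤ) (g : L2) (n : ℤ) :
    cf (mulLM (fun x => fourier m x) g) n = cf g (n - m) := by
  rw [cf_eq_fourierCoeff, cf_eq_fourierCoeff,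
    fourierCoeff_congr_ae (mulLM_apply_ae (memLp_fourier m) g), fourierCoeff_fourier_mul]

lemma mulLM_fourier_mem_coeffGE {k : ℤ} {g : L2} (hg : g ∈ coeffGE k) (m : ℤ) :
    mulLM (fun x => fourier m x) g ∈ coeffGE (k + m) :=
  mem_coeffGE.2 fun n hn => by
    rw [cf_mulLM_fourier]
    exact mem_coeffGE.1 hg _ (by omega)

lemma mem_coeffGE_add_one_iff {k : ℤ} {g : L2} :
    g ∈ coeffGE (k + 1) ↔ g ∈ coeffGE k ∧ cf g k = 0 := by
  simp only [mem_coeffGE, Int.lt_add_one_iff, le_iff_lt_or_eq]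
  exact ⟨fun h => ⟨fun n hn => h n (.inl hn), h k (.inr rfl)⟩,
    fun ⟨h, hk⟩ n => by rintro (hn | rfl) <;> simp [*]⟩

lemma mulLM_zf_mulLM_zbar (g : L2) : mulLM zf (mulLM zbar g) = g := by
  apply Lp.ext
  filter_upwards [mulLM_apply_ae memLp_zf (mulLM zbar g), mulLM_apply_ae memLp_zbar g]
    with x h1 h2
  have hz : zf x * zbar x = 1 := by
    simp only [zf, zbar, ← fourier_add]
    norm_num
  rw [h1, h2, ← mul_assoc, hz, one_mul]

lemma Sstar_mem_H2 (g : L2) : Sstar g ∈ H2 :=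
  have : CompleteSpace H2 := (isClosed_coeffGE 0).completeSpace_coe
  Submodule.coe_mem _

lemma Sstar_eq_mulLM_zbar {g : L2} (hg : g ∈ coeffGE 1) : Sstar g = mulLM zbar g := by
  have : CompleteSpace H2 := (isClosed_coeffGE 0).completeSpace_coe
  have hmem : mulLM zbar g ∈ coeffGE (1 + -1) := mulLM_fourier_mem_coeffGE hg (-1)
  exact H2.starProjection_eq_self_iff.2 hmem

lemma mulLM_zf_Sstar {g : L2} (hg : g ∈ coeffGE 1) : mulLM zf (Sstar g) = g := by
  rw [Sstar_eq_mulLM_zbar hg, mulLM_zf_mulLM_zbar]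

lemma mem_coeffGEv {n : ℕ} {k : ℤ} {F : Vec n} : F ∈ coeffGEv n k ↔ ∀ j, F j ∈ coeffGE k := by
  simp only [coeffGEv, Submodule.mem_iInf, Submodule.mem_comap]
  rfl

lemma ev0_eq_zero_iff {n : ℕ} {F : Vec n} : ev0 F = 0 ↔ ∀ j, cf (F j) 0 = 0 := by
  simp [ev0, funext_iff]

lemma mem_coeffGEv_one_iff {n : ℕ} {F : Vec n} : F ∈ coeffGEv n 1 ↔ F ∈ H2v n ∧ ev0 F = 0 := by
  simp only [H2v, mem_coeffGEv, ev0_eq_zero_iff, ← forall_and]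
  exact forall_congr' fun j => by simpa using mem_coeffGE_add_one_iff (k := 0)

lemma projLE_mem_coeffGEv {n i : ℕ} (h : i ≤ n) {k : ℤ} {F : Vec n} (hF : F ∈ coeffGEv n k) :
    projLE h F ∈ coeffGEv i k :=
  mem_coeffGEv.2 fun j => mem_coeffGEv.1 hF (Fin.castLE h j)

lemma SstarV_projLE {n i : ℕ} (h : i ≤ n) (F : Vec n) :
    SstarV (projLE h F) = projLE h (SstarV F) :=
  rfl

lemma isClosed_coeffGEv (n : ℕ) (k : ℤ) : IsClosed (coeffGEv n k : Set (Vec n)) := by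
  have h : (coeffGEv n k : Set (Vec n)) =
      ⋂ j : Fin n, (PiLp.proj (𝕜 := ℂ) 2 (fun _ : Fin n => L2) j) ⁻¹' (coeffGE k : Set L2) := by
    ext F
    simp [mem_coeffGEv]
  rw [h]
  exact isClosed_iInter fun j => (isClosed_coeffGE k).preimage (PiLp.proj _ _ j).continuous

lemma SstarV_mem_H2v_inf_comap_mulVLM_zf {n : ℕ} {F : Vec n} {U : Submodule ℂ (Vec n)}
    (hF : F ∈ coeffGEv n 1) (hFU : F ∈ U) : SstarV F ∈ H2v n ⊓ U.comap (mulVLM zf) := by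
  refine ⟨mem_coeffGEv.2 fun j => Sstar_mem_H2 _, ?_⟩
  have hzS : mulVLM zf (SstarV F) = F :=
    PiLp.ext fun j => mulLM_zf_Sstar (mem_coeffGEv.1 hF j)
  rwa [SetLike.mem_coe, Submodule.mem_comap, hzS]

theorem projection_of_nearly_invariant_with_defect_general
    {n : ℕ} (M : Submodule ℂ (Vec n)) (hMclosed : IsClosed (M : Set (Vec n)))
    (hMH : M ≤ H2v n)
    (D : Submodule ℂ (Vec n))
    (hnear : ∀ F ∈ M, ev0 F = 0 → SstarV F ∈ M ⊔ D)
    (r : ℕ) (W : Fin r → Vec n)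
    (hWspan : Submodule.span ℂ (Set.range W) = M ⊓ (M ⊓ coeffGEv n 1)ᗮ)
    (i : ℕ) (hin : i ≤ n)
    (f : Vec i) (hf : f ∈ M.map (projLE hin)) (hf0 : ev0 f = 0) :
    SstarV f ∈
      M.map (projLE hin) ⊔
        (H2v i ⊓ (Submodule.span ℂ
          (Set.range fun j => projLE hin (W j))).comap (mulVLM zf)) ⊔
        D.map (projLE hin) := by
  obtain ⟨F, hFM, rfl⟩ := hf
  set N := M ⊓ coeffGEv n 1
  have : CompleteSpace N := (hMclosed.inter (isClosed_coeffGEv n 1)).completeSpace_coe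
  obtain ⟨F₁, hF₁N, F₂, hF₂W, rfl⟩ := Submodule.mem_sup.1
    ((Submodule.sup_orthogonal_inf_of_hasOrthogonalProjection (inf_le_left : N ≤ M)).ge hFM)
  have hPF₁ : projLE hin F₁ ∈ coeffGEv i 1 := projLE_mem_coeffGEv hin hF₁N.2
  have hPF₂ : projLE hin F₂ ∈ coeffGEv i 1 := by
    have hPF : projLE hin (F₁ + F₂) ∈ coeffGEv i 1 :=
      mem_coeffGEv_one_iff.2 ⟨projLE_mem_coeffGEv hin (hMH hFM), hf0⟩
    simpa using sub_mem hPF hPF₁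
  have hPF₂W : projLE hin F₂ ∈ Submodule.span ℂ (Set.range fun j => projLE hin (W j)) := by
    rw [Set.range_comp' (projLE hin) W, ← Submodule.map_span, hWspan, inf_comm]
    exact Submodule.mem_map_of_mem hF₂W
  have hSF₁ : SstarV (projLE hin F₁) ∈ M.map (projLE hin) ⊔ D.map (projLE hin) := by
    rw [SstarV_projLE, ← Submodule.map_sup]
    exact Submodule.mem_map_of_mem (hnear F₁ hF₁N.1 (mem_coeffGEv_one_iff.1 hF₁N.2).2)
  rw [map_add, map_add, sup_right_comm]
  exact add_mem (Submodule.mem_sup_left hSF₁)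
    (Submodule.mem_sup_right (SstarV_mem_H2v_inf_comap_mulVLM_zf hPF₂ hPF₂W))

/-- **Theorem 3.1.** Let `M ⊆ H²(𝔻, ℂⁿ)` be a closed nearly `S*`-invariant subspace with
`m`-dimensional defect space `D` orthogonal to `M`, let `W₁, …, W_r` be an orthonormal basis
of `W = M ⊖ (M ∩ zH²(𝔻, ℂⁿ))`, and let `1 ≤ i ≤ n`.  Then `M_i = P_i(M)` is nearly
`S*`-invariant with defect space `(span{P_i W₁, …, P_i W_r}/z ∩ H²(𝔻, ℂⁱ)) + P_i(D)`:
whenever `f ∈ M_i` and `f(0) = 0`, the function `f/z = S*f` lies in that sum of spaces. -/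
theorem projection_of_nearly_invariant_with_defect
    {n : ℕ} (M : Submodule ℂ (Vec n)) (hMclosed : IsClosed (M : Set (Vec n)))
    (hMH : M ≤ H2v n)
    (m : ℕ) (D : Submodule ℂ (Vec n))
    (hDdim : Module.finrank ℂ D = m) (hDorth : D ≤ Mᗮ)
    (hnear : ∀ F ∈ M, ev0 F = 0 → SstarV F ∈ M ⊔ D)
    (r : ℕ) (W : Fin r → Vec n)
    (hWon : Orthonormal ℂ W)
    (hWmem : ∀ j, W j ∈ M ⊓ (M ⊓ coeffGEv n 1)ᗮ)
    (hWspan : Submodule.span ℂ (Set.range W) = M ⊓ (M ⊓ coeffGEv n 1)ᗮ)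
    (i : ℕ) (hi1 : 1 ≤ i) (hin : i ≤ n)
    (f : Vec i) (hf : f ∈ M.map (projLE hin)) (hf0 : ev0 f = 0) :
    SstarV f ∈
      M.map (projLE hin) ⊔
        (H2v i ⊓ (Submodule.span ℂ
          (Set.range fun j => projLE hin (W j))).comap (mulVLM zf)) ⊔
        D.map (projLE hin) :=
  projection_of_nearly_invariant_with_defect_general M hMclosed hMH D hnear r W hWspan i hin f hf
    hf0

end Paper
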